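/- arXiv:1706.08174 — 3 statements merged into one kernel-verified Lean document; each statement's English description precedes it below -/
import Mathlib

section
/- If κ is an infinite cardinal such that 2^λ < κ for all cardinals λ < cf(κ), then there exists a regular κ-tree. -/
/-!
Take a cofinal set `A ⊆ κ` of order type `cf(κ)` and let `T` consist of the `0/1`-valued nodes
that vanish off `A`. A node of length `α` is determined by the subset of `A ∩ α` where it takes
the value `1`, and `A ∩ α` has fewer than `cf(κ)` elements, so the levels have size
`≤ 2^|A ∩ α| < κ`. The tree is closed under unions of chains, so maximal branches reach every
level, and two extensions of a node that differ at a point of `A` above it witness perfectness.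
-/

open Cardinal Set

/-- A node of `^{<κ}κ`: a function from an ordinal `len < κ` into the ordinals `< κ`,
normalized to take value `0` at or beyond its length (so that equality of nodes is
extensional). -/
structure SeqNode (κ : Cardinal.{0}) : Type 1 where
  len : Ordinal.{0}
  len_lt : len < κ.ord
  val : Ordinal.{0} → Ordinal.{0}
  val_lt : ∀ β < len, val β < κ.ord
  val_eq_zero : ∀ β, len ≤ β → val β = 0

namespace SeqNode

variable {κ : Cardinal.{0}}

/-- `s.Init t` means `s ⊑ t`, i.e. `s` is an initial segment of `t`. -/
def Init (s t : SeqNode κ) : Prop :=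
  s.len ≤ t.len ∧ ∀ β < s.len, s.val β = t.val β

/-- The restriction `t ↾ β` of `t` to length `min β t.len`. -/
noncomputable def restrict (t : SeqNode κ) (β : Ordinal.{0}) : SeqNode κ where
  len := min β t.len
  len_lt := lt_of_le_of_lt (min_le_right _ _) t.len_lt
  val := fun γ => if γ < min β t.len then t.val γ else 0
  val_lt := fun γ hγ => by
    try dsimp only
    rw [if_pos hγ]
    exact t.val_lt γ (lt_of_lt_of_le hγ (min_le_right _ _))
  val_eq_zero := fun γ hγ => by
    try dsimp only
    rw [if_neg (not_lt.mpr hγ)]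

end SeqNode

/-- The level `T(α)`: nodes of `T` of length `α`. -/
def SeqLevel {κ : Cardinal.{0}} (T : Set (SeqNode κ)) (α : Ordinal.{0}) : Set (SeqNode κ) :=
  {t ∈ T | t.len = α}

/-- A tree: a set of nodes closed under initial segments. -/
def IsSeqTree {κ : Cardinal.{0}} (T : Set (SeqNode κ)) : Prop :=
  ∀ t ∈ T, ∀ s : SeqNode κ, s.Init t → s ∈ T

/-- A branch of `T`: a subset of `T` linearly ordered by the initial segment relation. -/
def IsBranch {κ : Cardinal.{0}} (T b : Set (SeqNode κ)) : Prop :=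
  b ⊆ T ∧ ∀ s ∈ b, ∀ t ∈ b, s.Init t ∨ t.Init s

/-- A maximal branch of `T`. -/
def IsMaximalBranch {κ : Cardinal.{0}} (T b : Set (SeqNode κ)) : Prop :=
  IsBranch T b ∧ ∀ b' : Set (SeqNode κ), IsBranch T b' → b ⊆ b' → b' = b

/-- `T` is perfect: every node has two incomparable extensions in `T`. -/
def IsPerfect {κ : Cardinal.{0}} (T : Set (SeqNode κ)) : Prop :=
  ∀ t ∈ T, ∃ s ∈ T, ∃ u ∈ T, t.Init s ∧ t.Init u ∧ ¬ s.Init u ∧ ¬ u.Init s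

/-- `T ⊆ ^{<κ}κ` is a regular tree of height `η`: it is a tree all of whose nodes
have length `< η`, it has nonempty levels of cardinality `< η.card` at every `α < η`,
every maximal branch meets every level `< η`, and it is perfect. -/
def IsRegularTreeIn (κ : Cardinal.{0}) (η : Ordinal.{0}) (T : Set (SeqNode κ)) : Prop :=
  IsSeqTree T ∧
  (∀ t ∈ T, t.len < η) ∧
  (∀ α < η, (SeqLevel T α).Nonempty) ∧
  (∀ α < η, Cardinal.mk ↥(SeqLevel T α) < Cardinal.lift.{1} η.card) ∧
  (∀ b : Set (SeqNode κ), IsMaximalBranch T b → ∀ α < η, ∃ t ∈ b, t.len = α) ∧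
  IsPerfect T

/-- A regular `κ`-tree. -/
def IsRegularTree (κ : Cardinal.{0}) (T : Set (SeqNode κ)) : Prop :=
  IsRegularTreeIn κ κ.ord T

/-- The truncation `T ∩ ^{<α}κ` of `T` below level `α`. -/
def TreeTrunc {κ : Cardinal.{0}} (T : Set (SeqNode κ)) (α : Ordinal.{0}) : Set (SeqNode κ) :=
  {t ∈ T | t.len < α}

/-- The level product `⊗_{i<d} X_i`: tuples all of whose entries lie on one common level. -/
def LevelProd {κ : Cardinal.{0}} {d : ℕ} (X : Fin d → Set (SeqNode κ)) :
    Set (Fin d → SeqNode κ) :=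
  {x | ∃ α : Ordinal.{0}, ∀ i, x i ∈ X i ∧ (x i).len = α}

/-- `X` dominates `Y`: every element of `Y` has an extension in `X`. -/
def Dominates {κ : Cardinal.{0}} (X Y : Set (SeqNode κ)) : Prop :=
  ∀ y ∈ Y, ∃ x ∈ X, SeqNode.Init y x

/-- `Cone t`: all extensions of `t`. -/
def Cone {κ : Cardinal.{0}} (t : SeqNode κ) : Set (SeqNode κ) :=
  {s : SeqNode κ | t.Init s}

/-- `X` is a somewhere dense level matrix for trees `T` of height `η`. -/
def IsSDMatrixIn {κ : Cardinal.{0}} (η : Ordinal.{0}) {d : ℕ}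
    (T X : Fin d → Set (SeqNode κ)) : Prop :=
  ∃ α β : Ordinal.{0}, α < β ∧ β < η ∧
    ∃ t : Fin d → SeqNode κ,
      (∀ i, t i ∈ SeqLevel (T i) α) ∧
      ∀ i, X i ⊆ SeqLevel (T i) β ∧
        Dominates (X i) (SeqLevel (T i) (α + 1) ∩ Cone (t i))

/-- `X` is a somewhere dense level matrix for the regular `κ`-trees `T`. -/
def IsSDMatrix (κ : Cardinal.{0}) {d : ℕ} (T X : Fin d → Set (SeqNode κ)) : Prop :=
  IsSDMatrixIn κ.ord T X

/-- The coloring `c` is constant (monochromatic) on the level product of `X`. -/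
def MonoOn {κ : Cardinal.{0}} {d : ℕ} (c : (Fin d → SeqNode κ) → Ordinal.{0})
    (X : Fin d → Set (SeqNode κ)) : Prop :=
  ∀ x ∈ LevelProd X, ∀ y ∈ LevelProd X, c x = c y

/-- The somewhere dense Halpern–Läuchli theorem `SDHL(d,σ,κ)`. -/
def SDHL (d : ℕ) (σ κ : Cardinal.{0}) : Prop :=
  ∀ T : Fin d → Set (SeqNode κ), (∀ i, IsRegularTree κ (T i)) →
    ∀ c : (Fin d → SeqNode κ) → Ordinal.{0},
      (∀ x ∈ LevelProd T, c x < σ.ord) →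
      ∃ X : Fin d → Set (SeqNode κ), (∀ i, X i ⊆ T i) ∧
        IsSDMatrix κ T X ∧ MonoOn c X

/-- `s` is an immediate successor of `t`. -/
def IsImmediateSucc {κ : Cardinal.{0}} (t s : SeqNode κ) : Prop :=
  t.Init s ∧ s.len = t.len + 1

/-- `A` is a cofinal subset of (the ordinals below) `η`. -/
def CofinalIn (A : Set Ordinal.{0}) (η : Ordinal.{0}) : Prop :=
  A ⊆ Set.Iio η ∧ ∀ β < η, ∃ α ∈ A, β ≤ α

/-- `T'` is a strong subtree of the regular `κ`-tree `T` witnessed by the cofinal set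
`A ⊆ κ` of splitting levels. -/
def IsStrongSubtree (κ : Cardinal.{0}) (T' T : Set (SeqNode κ)) (A : Set Ordinal.{0}) : Prop :=
  T' ⊆ T ∧ IsRegularTree κ T' ∧ CofinalIn A κ.ord ∧
    ∀ t ∈ T',
      (t.len ∈ A → ∀ s ∈ T, IsImmediateSucc t s → s ∈ T') ∧
      (t.len ∉ A → ∃! s : SeqNode κ, s ∈ T' ∧ IsImmediateSucc t s)

/-- The strong tree Halpern–Läuchli theorem `HL(d,σ,κ)`. -/
def HL (d : ℕ) (σ κ : Cardinal.{0}) : Prop :=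
  ∀ T : Fin d → Set (SeqNode κ), (∀ i, IsRegularTree κ (T i)) →
    ∀ c : (Fin d → SeqNode κ) → Ordinal.{0},
      (∀ x ∈ LevelProd T, c x < σ.ord) →
      ∃ T' : Fin d → Set (SeqNode κ), ∃ A : Set Ordinal.{0},
        (∀ i, IsStrongSubtree κ (T' i) (T i) A) ∧
        ∀ x : Fin d → SeqNode κ, (∃ α ∈ A, ∀ i, x i ∈ SeqLevel (T' i) α) →
          ∀ y : Fin d → SeqNode κ, (∃ α ∈ A, ∀ i, y i ∈ SeqLevel (T' i) α) →
            c x = c y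

/-- `e` is the increasing enumeration (along the ordinals below `η`) of `A`. -/
def IsIncreasingEnum (e : Ordinal.{0} → Ordinal.{0}) (η : Ordinal.{0})
    (A : Set Ordinal.{0}) : Prop :=
  (∀ ζ < η, e ζ ∈ A) ∧
  (∀ ζ ξ : Ordinal.{0}, ζ < ξ → ξ < η → e ζ < e ξ) ∧
  (∀ a ∈ A, ∃ ζ < η, e ζ = a)

/-- The tail cone Halpern–Läuchli theorem `HL^tc(d,<κ,κ)`. -/
def HLtc (d : ℕ) (κ : Cardinal.{0}) : Prop :=
  ∀ T : Fin d → Set (SeqNode κ), (∀ i, IsRegularTree κ (T i)) →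
    ∀ σ : Ordinal.{0} → Cardinal.{0}, (∀ ζ < κ.ord, 0 < σ ζ ∧ σ ζ < κ) →
      ∀ c : Ordinal.{0} → (Fin d → SeqNode κ) → Ordinal.{0},
        (∀ ζ < κ.ord, ∀ x ∈ LevelProd T, c ζ x < (σ ζ).ord) →
        ∃ T' : Fin d → Set (SeqNode κ), ∃ A : Set Ordinal.{0},
          ∃ e : Ordinal.{0} → Ordinal.{0},
            (∀ i, IsStrongSubtree κ (T' i) (T i) A) ∧
            IsIncreasingEnum e κ.ord A ∧
            ∀ ζ ξ : Ordinal.{0}, ζ ≤ ξ → ξ < κ.ord →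
              ∀ t : Fin d → SeqNode κ, (∀ i, t i ∈ SeqLevel (T' i) (e ξ)) →
                c ζ t = c ζ (fun i => (t i).restrict (e ζ))

/-- The modified tail cone Halpern–Läuchli theorem. -/
def HLtcMod (d : ℕ) (κ : Cardinal.{0}) : Prop :=
  ∀ T : Fin d → Set (SeqNode κ), (∀ i, IsRegularTree κ (T i)) →
    ∀ σ : Ordinal.{0} → Cardinal.{0}, (∀ ζ < κ.ord, 0 < σ ζ ∧ σ ζ < κ) →
      ∀ c : Ordinal.{0} → (Fin d → SeqNode κ) → Ordinal.{0},
        (∀ ζ < κ.ord, ∀ x ∈ LevelProd T, c ζ x < (σ ζ).ord) →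
        ∃ T' : Fin d → Set (SeqNode κ), ∃ A : Set Ordinal.{0},
          ∃ e : Ordinal.{0} → Ordinal.{0},
            (∀ i, IsStrongSubtree κ (T' i) (T i) A) ∧
            IsIncreasingEnum e κ.ord A ∧
            ∃ μ : Ordinal.{0} → Ordinal.{0},
              (∀ γ < κ.ord, γ ≤ μ γ ∧ μ γ < κ.ord) ∧
              ∀ ζ γ : Ordinal.{0}, ζ ≤ γ → γ < κ.ord →
                ∀ t : Fin d → SeqNode κ, (∀ i, t i ∈ SeqLevel (T' i) (e γ)) →
                  c (μ ζ) t = c (μ ζ) (fun i => (t i).restrict (e ζ))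

/-- `κ` is strongly inaccessible: uncountable, regular, and a strong limit. -/
def StronglyInaccessible (κ : Cardinal.{0}) : Prop :=
  ℵ₀ < κ ∧ κ.IsRegular ∧ ∀ lam : Cardinal.{0}, lam < κ → (2 : Cardinal.{0}) ^ lam < κ

/-- `C` is a club (closed unbounded) subset of the ordinals below `η`. -/
def IsClubIn (C : Set Ordinal.{0}) (η : Ordinal.{0}) : Prop :=
  C ⊆ Set.Iio η ∧ (∀ β < η, ∃ γ ∈ C, β ≤ γ) ∧
    ∀ s ⊆ C, s.Nonempty → sSup s < η → sSup s ∈ C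

/-- `S` is a stationary subset of the ordinals below `η`. -/
def IsStationaryIn (S : Set Ordinal.{0}) (η : Ordinal.{0}) : Prop :=
  ∀ C : Set Ordinal.{0}, IsClubIn C η → (S ∩ C).Nonempty

/-- `U` is an ultrafilter on the ordinals below `η`. -/
def IsUltrafilterOn (U : Set (Set Ordinal.{0})) (η : Ordinal.{0}) : Prop :=
  (∀ A ∈ U, A ⊆ Set.Iio η) ∧ Set.Iio η ∈ U ∧ (∅ : Set Ordinal.{0}) ∉ U ∧
  (∀ A ∈ U, ∀ B : Set Ordinal.{0}, A ⊆ B → B ⊆ Set.Iio η → B ∈ U) ∧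
  (∀ A ∈ U, ∀ B ∈ U, A ∩ B ∈ U) ∧
  (∀ A : Set Ordinal.{0}, A ⊆ Set.Iio η → (A ∈ U ∨ Set.Iio η \ A ∈ U))

/-- `U` is `κ`-complete: closed under intersections of fewer than `κ` of its members. -/
def IsKappaComplete (U : Set (Set Ordinal.{0})) (κ : Cardinal.{0}) : Prop :=
  ∀ s : Set (Set Ordinal.{0}), s ⊆ U → s.Nonempty →
    Cardinal.mk ↥s < Cardinal.lift.{1} κ → ⋂₀ s ∈ U

/-- `U` is nonprincipal. -/
def IsNonprincipal (U : Set (Set Ordinal.{0})) : Prop :=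
  ∀ β : Ordinal.{0}, ({β} : Set Ordinal.{0}) ∉ U

/-- `U` is a normal ultrafilter on `κ`: a nonprincipal `κ`-complete ultrafilter closed
under diagonal intersections. -/
def IsNormalUltrafilterOn (U : Set (Set Ordinal.{0})) (κ : Cardinal.{0}) : Prop :=
  IsUltrafilterOn U κ.ord ∧ IsKappaComplete U κ ∧ IsNonprincipal U ∧
    ∀ A : Ordinal.{0} → Set Ordinal.{0}, (∀ α < κ.ord, A α ∈ U) →
      {β : Ordinal.{0} | β < κ.ord ∧ ∀ α < β, β ∈ A α} ∈ U

/-- `κ` is a measurable cardinal. -/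
def IsMeasurableCard (κ : Cardinal.{0}) : Prop :=
  ℵ₀ < κ ∧ ∃ U : Set (Set Ordinal.{0}),
    IsUltrafilterOn U κ.ord ∧ IsKappaComplete U κ ∧ IsNonprincipal U

/-- The set of (ordinals which are) infinite cardinals `α < κ` with `σ < α` at which
`SDHL(d,σ,α)` holds, viewed as a set of ordinals below `κ`. -/
def SDHLset (d : ℕ) (σ κ : Cardinal.{0}) : Set Ordinal.{0} :=
  {β : Ordinal.{0} | β < κ.ord ∧ ℵ₀ ≤ β.card ∧ β.card.ord = β ∧ σ < β.card ∧
    SDHL d σ β.card}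

namespace SeqNode

variable {κ : Cardinal.{0}}

theorem ext {s t : SeqNode κ} (hlen : s.len = t.len) (hval : ∀ β, s.val β = t.val β) : s = t := by
  cases s; cases t
  cases hlen
  cases funext hval
  rfl

theorem Init.refl (s : SeqNode κ) : s.Init s := ⟨le_rfl, fun _ _ => rfl⟩

theorem Init.trans {s t u : SeqNode κ} (hst : s.Init t) (htu : t.Init u) : s.Init u :=
  ⟨hst.1.trans htu.1, fun β hβ => (hst.2 β hβ).trans (htu.2 β (hβ.trans_le hst.1))⟩

theorem Init.total_of_init {s t u : SeqNode κ} (hsu : s.Init u) (htu : t.Init u) :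
    s.Init t ∨ t.Init s := by
  rcases le_total s.len t.len with hle | hle
  · exact .inl ⟨hle, fun β hβ => (hsu.2 β hβ).trans (htu.2 β (hβ.trans_le hle)).symm⟩
  · exact .inr ⟨hle, fun β hβ => (htu.2 β hβ).trans (hsu.2 β (hβ.trans_le hle)).symm⟩

theorem not_init_of_val_ne {s t : SeqNode κ} {β : Ordinal.{0}} (hβ : β < s.len)
    (hne : s.val β ≠ t.val β) : ¬ s.Init t :=
  fun hst => hne (hst.2 β hβ)

theorem Init.val_eq_zero_or_eq {s t : SeqNode κ} (hst : s.Init t) (β : Ordinal.{0}) :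
    s.val β = 0 ∨ s.val β = t.val β := by
  rcases lt_or_ge β s.len with hβ | hβ
  · exact .inr (hst.2 β hβ)
  · exact .inl (s.val_eq_zero β hβ)

theorem restrict_len_of_le {t : SeqNode κ} {β : Ordinal.{0}} (hβ : β ≤ t.len) :
    (t.restrict β).len = β :=
  min_eq_left hβ

theorem restrict_init (t : SeqNode κ) (β : Ordinal.{0}) : (t.restrict β).Init t :=
  ⟨min_le_right _ _, fun _ hγ => if_pos hγ⟩

noncomputable def ofFun (α : Ordinal.{0}) (hα : α < κ.ord) (v : Ordinal.{0} → Ordinal.{0})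
    (hv : ∀ β < α, v β < κ.ord) : SeqNode κ where
  len := α
  len_lt := hα
  val β := if β < α then v β else 0
  val_lt β hβ := by rw [if_pos hβ]; exact hv β hβ
  val_eq_zero β hβ := if_neg (not_lt.mpr hβ)

theorem ofFun_val {α : Ordinal.{0}} (hα : α < κ.ord) (v : Ordinal.{0} → Ordinal.{0})
    (hv : ∀ β < α, v β < κ.ord) (β : Ordinal.{0}) :
    (ofFun α hα v hv).val β = if β < α then v β else 0 :=
  rfl

/-- The union of a chain `b` of nodes, cut off (or padded with zeros) at length `α`. -/
noncomputable def chainSup (b : Set (SeqNode κ)) (α : Ordinal.{0}) (hα : α < κ.ord) :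
    SeqNode κ :=
  open Classical in
  ofFun α hα (fun β => if h : ∃ s ∈ b, β < s.len then h.choose.val β else 0) fun β _ => by
    split_ifs with h
    · exact h.choose.val_lt β h.choose_spec.2
    · exact zero_le.trans_lt hα

variable {b : Set (SeqNode κ)} {α : Ordinal.{0}} {hα : α < κ.ord}

theorem chainSup_val_eq_zero_or_mem (β : Ordinal.{0}) :
    (chainSup b α hα).val β = 0 ∨ ∃ s ∈ b, (chainSup b α hα).val β = s.val β := by
  classical
  simp only [chainSup, ofFun_val]
  split_ifs with _ h
  · exact .inr ⟨h.choose, h.choose_spec.1, rfl⟩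
  all_goals exact .inl rfl

theorem init_chainSup (hb : ∀ s ∈ b, ∀ t ∈ b, s.Init t ∨ t.Init s)
    (hlen : ∀ s ∈ b, s.len ≤ α) {s : SeqNode κ} (hs : s ∈ b) : s.Init (chainSup b α hα) := by
  classical
  refine ⟨hlen s hs, fun β hβ => ?_⟩
  have h : ∃ s ∈ b, β < s.len := ⟨s, hs, hβ⟩
  simp only [chainSup, ofFun_val, if_pos (hβ.trans_le (hlen s hs)), dif_pos h]
  rcases hb s hs h.choose h.choose_spec.1 with hst | hts
  · exact hst.2 β hβ
  · exact (hts.2 β h.choose_spec.2).symm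


/-- `t` followed by zeros up to `a` and then the value `ε` at position `a`. -/
noncomputable def extendAt (t : SeqNode κ) (a ε : Ordinal.{0}) (ha : a + 1 < κ.ord)
    (hε : ε < κ.ord) : SeqNode κ :=
  ofFun (a + 1) ha (Function.update t.val a ε) fun β _ => by
    rcases eq_or_ne β a with rfl | hβa
    · rwa [Function.update_self]
    rw [Function.update_of_ne hβa]
    rcases lt_or_ge β t.len with hβ | hβ
    · exact t.val_lt β hβ
    · rw [t.val_eq_zero β hβ]; exact zero_le.trans_lt hε

variable {t : SeqNode κ} {a ε : Ordinal.{0}} {ha : a + 1 < κ.ord} {hε : ε < κ.ord}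

theorem extendAt_val_self : (t.extendAt a ε ha hε).val a = ε := by
  simp only [extendAt, ofFun_val, if_pos (lt_add_one a), Function.update_self]

theorem init_extendAt (hta : t.len ≤ a) : t.Init (t.extendAt a ε ha hε) := by
  refine ⟨hta.trans ((lt_add_one a).le), fun β hβ => ?_⟩
  have hβa : β < a + 1 := (hβ.trans_le hta).trans_le ((lt_add_one a).le)
  simp only [extendAt, ofFun_val, if_pos hβa, Function.update_of_ne (hβ.trans_le hta).ne]

end SeqNode

open SeqNode

section MaximalBranch

variable {κ : Cardinal.{0}} {T b : Set (SeqNode κ)}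

theorem IsMaximalBranch.mem_of_forall_comparable (hb : IsMaximalBranch T b) {u : SeqNode κ}
    (hu : u ∈ T) (hcomp : ∀ t ∈ b, t.Init u ∨ u.Init t) : u ∈ b := by
  have hbranch : IsBranch T (insert u b) := by
    refine ⟨insert_subset hu hb.1.1, ?_⟩
    rintro s (hsu | hs) t (htu | ht)
    · rw [hsu, htu]; exact .inl (Init.refl u)
    · rw [hsu]; exact (hcomp t ht).symm
    · rw [htu]; exact hcomp s hs
    · exact hb.1.2 s hs t ht
  rw [← hb.2 _ hbranch (subset_insert u b)]
  exact mem_insert u b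

theorem IsMaximalBranch.exists_len_eq_of_le (hT : IsSeqTree T) (hb : IsMaximalBranch T b)
    {s : SeqNode κ} (hs : s ∈ b) {α : Ordinal.{0}} (hα : α ≤ s.len) : ∃ t ∈ b, t.len = α := by
  refine ⟨s.restrict α, hb.mem_of_forall_comparable (hT s (hb.1.1 hs) _ (restrict_init s α))
    fun t ht => ?_, restrict_len_of_le hα⟩
  rcases hb.1.2 t ht s hs with hts | hst
  · exact Init.total_of_init hts (restrict_init s α)
  · exact .inr ((restrict_init s α).trans hst)

theorem IsMaximalBranch.exists_len_eq (hT : IsSeqTree T) (hb : IsMaximalBranch T b)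
    {α : Ordinal.{0}}
    (hsup : ∀ c ⊆ T, (∀ s ∈ c, ∀ t ∈ c, s.Init t ∨ t.Init s) → (∀ s ∈ c, s.len < α) →
      ∃ u ∈ T, u.len = α ∧ ∀ s ∈ c, s.Init u) :
    ∃ t ∈ b, t.len = α := by
  by_cases hlong : ∃ s ∈ b, α ≤ s.len
  · obtain ⟨s, hs, hαs⟩ := hlong
    exact hb.exists_len_eq_of_le hT hs hαs
  · push Not at hlong
    obtain ⟨u, huT, hulen, hu⟩ := hsup b hb.1.1 hb.1.2 hlong
    exact ⟨u, hb.mem_of_forall_comparable huT fun t ht => .inl (hu t ht), hulen⟩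

end MaximalBranch

def binaryTreeOn (κ : Cardinal.{0}) (A : Set Ordinal.{0}) : Set (SeqNode κ) :=
  {t | ∀ β, t.val β = 0 ∨ (β ∈ A ∧ t.val β = 1)}

section BinaryTree

variable {κ : Cardinal.{0}} {A : Set Ordinal.{0}}

theorem mem_binaryTreeOn_of_val {t : SeqNode κ}
    (h : ∀ β, t.val β = 0 ∨ ∃ s ∈ binaryTreeOn κ A, t.val β = s.val β) :
    t ∈ binaryTreeOn κ A := by
  intro β
  rcases h β with h0 | ⟨s, hs, hts⟩
  · exact .inl h0
  · rw [hts]; exact hs β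

theorem isSeqTree_binaryTreeOn : IsSeqTree (binaryTreeOn κ A) :=
  fun t ht _ hst => mem_binaryTreeOn_of_val fun β =>
    (hst.val_eq_zero_or_eq β).imp_right fun h => ⟨t, ht, h⟩

theorem chainSup_mem_binaryTreeOn {b : Set (SeqNode κ)} (hb : b ⊆ binaryTreeOn κ A)
    {α : Ordinal.{0}} (hα : α < κ.ord) : chainSup b α hα ∈ binaryTreeOn κ A :=
  mem_binaryTreeOn_of_val fun β => (chainSup_val_eq_zero_or_mem β).imp_right
    fun ⟨s, hs, h⟩ => ⟨s, hb hs, h⟩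

theorem ext_of_mem_binaryTreeOn {t t' : SeqNode κ} (ht : t ∈ binaryTreeOn κ A)
    (ht' : t' ∈ binaryTreeOn κ A) (hlen : t.len = t'.len)
    (hone : ∀ β < t.len, β ∈ A → (t.val β = 1 ↔ t'.val β = 1)) : t = t' := by
  refine SeqNode.ext hlen fun β => ?_
  rcases lt_or_ge β t.len with hβ | hβ
  · rcases ht β with h | ⟨hA, h⟩ <;> rcases ht' β with h' | ⟨hA', h'⟩
    · rw [h, h']
    · exact absurd ((hone β hβ hA').mpr h') (by rw [h]; exact zero_ne_one)
    · exact absurd ((hone β hβ hA).mp h) (by rw [h']; exact zero_ne_one)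
    · rw [h, h']
  · rw [t.val_eq_zero β hβ, t'.val_eq_zero β (hlen ▸ hβ)]

theorem mk_level_binaryTreeOn_le (α : Ordinal.{0}) :
    #(SeqLevel (binaryTreeOn κ A) α) ≤ 2 ^ #↥(A ∩ Iio α) := by
  rw [← mk_set]
  refine mk_le_of_injective (f := fun t => {x : ↥(A ∩ Iio α) | t.1.val x = 1}) ?_
  rintro ⟨t, ht, htα⟩ ⟨t', ht', ht'α⟩ htt'
  refine Subtype.ext (ext_of_mem_binaryTreeOn ht ht' (htα.trans ht'α.symm) fun β hβ hA => ?_)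
  exact Set.ext_iff.mp htt' ⟨β, hA, htα ▸ hβ⟩

theorem extendAt_mem_binaryTreeOn {t : SeqNode κ} (ht : t ∈ binaryTreeOn κ A) {a ε : Ordinal.{0}}
    (ha : a + 1 < κ.ord) (hε : ε < κ.ord) (hεA : ε = 0 ∨ (a ∈ A ∧ ε = 1)) :
    t.extendAt a ε ha hε ∈ binaryTreeOn κ A := by
  intro β
  simp only [extendAt, ofFun_val]
  split_ifs
  · rcases eq_or_ne β a with rfl | hβa
    · rwa [Function.update_self]
    · rw [Function.update_of_ne hβa]; exact ht β
  · exact .inl rfl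

theorem isPerfect_binaryTreeOn (hκ : ℵ₀ ≤ κ) (hA : CofinalIn A κ.ord) :
    IsPerfect (binaryTreeOn κ A) := by
  intro t ht
  obtain ⟨a, haA, hta⟩ := hA.2 t.len t.len_lt
  have ha : a + 1 < κ.ord := (isSuccLimit_ord hκ).add_one_lt (hA.1 haA)
  have h1 : (1 : Ordinal.{0}) < κ.ord := by
    rw [← ord_one, ord_lt_ord]; exact one_lt_aleph0.trans_le hκ
  have h0 : (0 : Ordinal.{0}) < κ.ord := zero_lt_one.trans h1
  have haα : a < a + 1 := lt_add_one a
  refine ⟨t.extendAt a 0 ha h0, extendAt_mem_binaryTreeOn ht ha h0 (.inl rfl),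
    t.extendAt a 1 ha h1, extendAt_mem_binaryTreeOn ht ha h1 (.inr ⟨haA, rfl⟩),
    init_extendAt hta, init_extendAt hta, not_init_of_val_ne haα ?_, not_init_of_val_ne haα ?_⟩
  all_goals simp only [extendAt_val_self]; norm_num

theorem isRegularTree_binaryTreeOn (hκ : ℵ₀ ≤ κ) (hA : CofinalIn A κ.ord)
    (hlevel : ∀ α < κ.ord, 2 ^ #↥(A ∩ Iio α) < Cardinal.lift.{1} κ) :
    IsRegularTree κ (binaryTreeOn κ A) := by
  refine ⟨isSeqTree_binaryTreeOn, fun t _ => t.len_lt, fun α hα => ?_, fun α hα => ?_,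
    fun b hb α hα => ?_, isPerfect_binaryTreeOn hκ hA⟩
  · refine ⟨chainSup ∅ α hα, chainSup_mem_binaryTreeOn (empty_subset _) hα, rfl⟩
  · rw [card_ord]
    exact (mk_level_binaryTreeOn_le α).trans_lt (hlevel α hα)
  · refine hb.exists_len_eq isSeqTree_binaryTreeOn fun c hcT hc hlen => ?_
    exact ⟨chainSup c α hα, chainSup_mem_binaryTreeOn hcT hα, rfl,
      fun _ => init_chainSup hc fun s hs => (hlen s hs).le⟩

end BinaryTree

namespace Ordinal.IsFundamentalSeq

theorem cofinalIn_range {a o : Ordinal.{0}} {f : Iio a → Iio o} (hf : IsFundamentalSeq f) :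
    CofinalIn (range fun i => (f i : Ordinal.{0})) o := by
  refine ⟨by rintro _ ⟨i, rfl⟩; exact (f i).2, fun β hβ => ?_⟩
  obtain ⟨_, ⟨i, rfl⟩, hi⟩ := hf.isCofinal_range ⟨β, hβ⟩
  exact ⟨f i, ⟨i, rfl⟩, hi⟩

universe u

variable {a o : Ordinal.{u}} {f : Iio a → Iio o}

theorem mk_range_inter_Iio_lt (hf : IsFundamentalSeq f) {α : Ordinal.{u}} (hα : α < o) :
    #↥((range fun i => (f i : Ordinal.{u})) ∩ Iio α) < Cardinal.lift.{u + 1} o.cof := by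
  obtain ⟨_, ⟨i₀, rfl⟩, hi₀⟩ := hf.isCofinal_range ⟨α, hα⟩
  let g : Iio (i₀ : Ordinal.{u}) → Ordinal.{u} := fun j =>
    f ⟨j, mem_Iio.mpr ((mem_Iio.mp j.2).trans (mem_Iio.mp i₀.2))⟩
  have hsub : (range fun i => (f i : Ordinal.{u})) ∩ Iio α ⊆ range g := by
    rintro _ ⟨⟨i, rfl⟩, hiα⟩
    exact ⟨⟨i, hf.strictMono.lt_iff_lt.mp (Subtype.coe_lt_coe.mp (hiα.trans_le hi₀))⟩, rfl⟩
  calc #↥((range fun i => (f i : Ordinal.{u})) ∩ Iio α) ≤ #↥(range g) := mk_le_mk_of_subset hsub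
    _ ≤ #↥(Iio (i₀ : Ordinal.{u})) := mk_range_le
    _ = Cardinal.lift.{u + 1} (i₀ : Ordinal.{u}).card := Cardinal.mk_Iio_ordinal _
    _ < Cardinal.lift.{u + 1} o.cof := by
      rw [Cardinal.lift_lt, ← lt_ord, hf.ord_cof]; exact i₀.2

end Ordinal.IsFundamentalSeq

/-- If κ is an infinite cardinal with `2^λ < κ` for all cardinals
`λ < cf(κ)`, then there exists a regular κ-tree. -/
theorem exists_regular_tree (κ : Cardinal.{0}) (hκ : ℵ₀ ≤ κ)
    (h : ∀ lam : Cardinal.{0}, lam < Ordinal.cof κ.ord → (2 : Cardinal.{0}) ^ lam < κ) :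
    ∃ T : Set (SeqNode κ), IsRegularTree κ T := by
  obtain ⟨f, hf⟩ := Ordinal.exists_isFundamentalSeq (o := κ.ord) rfl
  refine ⟨binaryTreeOn κ _, isRegularTree_binaryTreeOn hκ hf.cofinalIn_range fun α hα => ?_⟩
  obtain ⟨μ, hμ, hμA⟩ := lt_lift_iff.mp (hf.mk_range_inter_Iio_lt hα)
  rw [← hμA, ← lift_two.{1, 0}, ← lift_power, lift_lt]
  exact h μ hμ
end

section
/- Fix 1 ≤ d < ω and a strongly inaccessible cardinal κ. Then HL^tc(d,<κ,κ) and the modified HL^tc(d,<κ,κ) are equivalent. -/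
open Cardinal Set

/-! The forward direction takes `μ = id`. For the converse, replace `c ξ` by a coloring that
codes the whole tuple `⟨c ι : ι ≤ ξ⟩` into one ordinal: as `κ` is regular and a strong limit,
this coloring still has fewer than `κ` colors, and homogeneity of the coded coloring at level
`μ ζ ≥ ζ` yields homogeneity of `c ζ`. -/

namespace SeqNode

variable {κ : Cardinal.{0}}

theorem len_restrict_of_le {t : SeqNode κ} {β : Ordinal.{0}} (h : β ≤ t.len) :
    (t.restrict β).len = β :=
  min_eq_left h

end SeqNode

section Levels

variable {κ : Cardinal.{0}} {d : ℕ}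

theorem restrict_mem_seqLevel {T : Set (SeqNode κ)} (hT : IsSeqTree T) {t : SeqNode κ}
    {α β : Ordinal.{0}} (ht : t ∈ SeqLevel T β) (hαβ : α ≤ β) :
    t.restrict α ∈ SeqLevel T α :=
  ⟨hT t ht.1 _ (t.restrict_init α), SeqNode.len_restrict_of_le (ht.2 ▸ hαβ)⟩

theorem mem_levelProd_of_mem_seqLevel {T : Fin d → Set (SeqNode κ)} {t : Fin d → SeqNode κ}
    {α : Ordinal.{0}} (ht : ∀ i, t i ∈ SeqLevel (T i) α) : t ∈ LevelProd T :=
  ⟨α, ht⟩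

end Levels

theorem IsIncreasingEnum.monotoneOn {e : Ordinal.{0} → Ordinal.{0}} {η : Ordinal.{0}}
    {A : Set Ordinal.{0}} (he : IsIncreasingEnum e η A) : MonotoneOn e (Iio η) := by
  intro ζ _ ξ hξ hζξ
  rcases hζξ.eq_or_lt with rfl | hlt
  · exact le_rfl
  · exact (he.2.1 ζ ξ hlt hξ).le

theorem StronglyInaccessible.power_lt {κ a b : Cardinal.{0}} (hκ : StronglyInaccessible κ)
    (ha : a < κ) (hb : b < κ) : a ^ b < κ := by
  set m := a ⊔ b ⊔ ℵ₀
  have hm : m < κ := sup_lt_iff.2 ⟨sup_lt_iff.2 ⟨ha, hb⟩, hκ.1⟩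
  calc a ^ b ≤ m ^ m :=
        (power_le_power_right (le_sup_left.trans le_sup_left)).trans
          (power_le_power_left (aleph0_pos.trans_le le_sup_right).ne'
            (le_sup_right.trans le_sup_left))
    _ = 2 ^ m := power_self_eq le_sup_right
    _ < κ := hκ.2.2 m hm

theorem nonempty_equiv_Iio_power (o : Ordinal.{0}) (b : Cardinal.{0}) :
    Nonempty ((Iio o → Iio b.ord) ≃ Iio (b ^ o.card).ord) := by
  rw [← Cardinal.eq, mk_arrow, mk_Iio_ordinal, mk_Iio_ordinal, mk_Iio_ordinal, card_ord,
    card_ord, lift_id, lift_id, lift_power]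

section CumulativeColoring

variable {X : Type*} {κ : Cardinal.{0}} {σ : Ordinal.{0} → Cardinal.{0}}
  {c : Ordinal.{0} → X → Ordinal.{0}}

noncomputable def colorBound (σ : Ordinal.{0} → Cardinal.{0}) (ξ : Ordinal.{0}) :
    Cardinal.{0} :=
  ⨆ ι : Iio (ξ + 1), σ ι

theorem le_colorBound {ζ ξ : Ordinal.{0}} (h : ζ ≤ ξ) : σ ζ ≤ colorBound σ ξ :=
  le_ciSup (f := fun ι : Iio (ξ + 1) => σ ι) bddAbove_of_small ⟨ζ, Order.lt_add_one_iff.2 h⟩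

theorem colorBound_lt (hκ : κ.IsRegular) (hσ : ∀ ζ < κ.ord, σ ζ < κ) {ξ : Ordinal.{0}}
    (hξ : ξ < κ.ord) : colorBound σ ξ < κ := by
  have hξ1 : ξ + 1 < κ.ord := (isSuccLimit_ord hκ.1).add_one_lt hξ
  refine lift_iSup_lt_of_lt_cof_ord ?_ fun ι => hσ ι (ι.2.trans hξ1)
  rw [mk_Iio_ordinal, lift_lift, ← lift_ord, ← Ordinal.lift_cof, hκ.cof_ord, lift_umax, lift_lt,
    ← lt_ord]
  exact hξ1

noncomputable def cumulativeBound (σ : Ordinal.{0} → Cardinal.{0}) (ξ : Ordinal.{0}) :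
    Cardinal.{0} :=
  colorBound σ ξ ^ (ξ + 1).card

theorem cumulativeBound_pos_lt (hκ : StronglyInaccessible κ)
    (hσ : ∀ ζ < κ.ord, 0 < σ ζ ∧ σ ζ < κ) {ξ : Ordinal.{0}} (hξ : ξ < κ.ord) :
    0 < cumulativeBound σ ξ ∧ cumulativeBound σ ξ < κ :=
  ⟨power_pos _ ((hσ ξ hξ).1.trans_le (le_colorBound le_rfl)),
    hκ.power_lt (colorBound_lt hκ.2.1 (fun ζ hζ => (hσ ζ hζ).2) hξ)
      (lt_ord.1 ((isSuccLimit_ord hκ.2.1.1).add_one_lt hξ))⟩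

open Classical in
noncomputable def cumulativeColoring (σ : Ordinal.{0} → Cardinal.{0})
    (c : Ordinal.{0} → X → Ordinal.{0}) (ξ : Ordinal.{0}) (x : X) : Ordinal.{0} :=
  if h : ∀ ι : Iio (ξ + 1), c ι x < (colorBound σ ξ).ord then
    ((nonempty_equiv_Iio_power (ξ + 1) (colorBound σ ξ)).some fun ι => ⟨c ι x, h ι⟩ :
      Ordinal.{0})
  else 0

theorem cumulativeColoring_lt {ξ : Ordinal.{0}} (hpos : 0 < cumulativeBound σ ξ) (x : X) :
    cumulativeColoring σ c ξ x < (cumulativeBound σ ξ).ord := by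
  unfold cumulativeColoring
  split_ifs
  · exact Subtype.prop _
  · exact ord_pos.2 hpos

theorem eq_of_cumulativeColoring_eq {S : Set X}
    (hc : ∀ ζ < κ.ord, ∀ x ∈ S, c ζ x < (σ ζ).ord) {ξ : Ordinal.{0}} (hξ : ξ < κ.ord)
    {x y : X} (hx : x ∈ S) (hy : y ∈ S)
    (h : cumulativeColoring σ c ξ x = cumulativeColoring σ c ξ y) {ζ : Ordinal.{0}}
    (hζ : ζ ≤ ξ) : c ζ x = c ζ y := by
  have hbound : ∀ z ∈ S, ∀ ι : Iio (ξ + 1), c ι z < (colorBound σ ξ).ord := fun z hz ι =>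
    have hι : (ι : Ordinal.{0}) ≤ ξ := Order.lt_add_one_iff.1 ι.2
    (hc ι (hι.trans_lt hξ) z hz).trans_le (ord_le_ord.2 (le_colorBound hι))
  rw [cumulativeColoring, cumulativeColoring, dif_pos (hbound x hx), dif_pos (hbound y hy)] at h
  exact congrArg Subtype.val
    (congrFun (Equiv.injective _ (Subtype.coe_injective h)) ⟨ζ, Order.lt_add_one_iff.2 hζ⟩)

end CumulativeColoring

theorem HLtc.hLtcMod {d : ℕ} {κ : Cardinal.{0}} (h : HLtc d κ) : HLtcMod d κ := by
  intro T hT σ hσ c hc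
  obtain ⟨T', A, e, hT', he, hhom⟩ := h T hT σ hσ c hc
  exact ⟨T', A, e, hT', he, id, fun γ hγ => ⟨le_rfl, hγ⟩, hhom⟩

theorem HLtcMod.hLtc {d : ℕ} {κ : Cardinal.{0}} (hκ : StronglyInaccessible κ)
    (h : HLtcMod d κ) : HLtc d κ := by
  intro T hT σ hσ c hc
  obtain ⟨T', A, e, hT', he, μ, hμ, hhom⟩ :=
    h T hT (cumulativeBound σ) (fun ξ hξ => cumulativeBound_pos_lt hκ hσ hξ)
      (cumulativeColoring σ c)
      (fun ξ hξ x _ => cumulativeColoring_lt (cumulativeBound_pos_lt hκ hσ hξ).1 x)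
  refine ⟨T', A, e, hT', he, fun ζ ξ hζξ hξ t ht => ?_⟩
  have hζ : ζ < κ.ord := hζξ.trans_lt hξ
  have htT : ∀ i, t i ∈ SeqLevel (T i) (e ξ) := fun i => ⟨(hT' i).1 (ht i).1, (ht i).2⟩
  have heζξ : e ζ ≤ e ξ := he.monotoneOn hζ hξ hζξ
  exact eq_of_cumulativeColoring_eq hc (hμ ζ hζ).2 (mem_levelProd_of_mem_seqLevel htT)
    (mem_levelProd_of_mem_seqLevel fun i => restrict_mem_seqLevel (hT i).1 (htT i) heζξ)
    (hhom ζ ξ hζξ hξ t ht) (hμ ζ hζ).1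

theorem hltc_iff_hltcMod_general (d : ℕ) (κ : Cardinal.{0})
    (hκ : StronglyInaccessible κ) :
    HLtc d κ ↔ HLtcMod d κ :=
  ⟨HLtc.hLtcMod, HLtcMod.hLtc hκ⟩

/-- For strongly inaccessible κ, the tail cone Halpern–Läuchli theorem
and its modified version are equivalent. -/
theorem hltc_iff_hltcMod (d : ℕ) (hd : 1 ≤ d) (κ : Cardinal.{0})
    (hκ : StronglyInaccessible κ) :
    HLtc d κ ↔ HLtcMod d κ :=
  hltc_iff_hltcMod_general d κ hκ
end

section
/- For every 1 ≤ d < ω and every infinite cardinal κ, HL^tc(d,<κ,κ) implies that HL(d,σ,κ) holds for every cardinal σ with 0 < σ < κ. -/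
open Cardinal Set

/-!
Apply `HL^tc` to the constant sequence of colorings `c_ζ = c`. Each tuple on a level `α_ξ ∈ A`
then has the color of its restriction to the least splitting level `α_0`. Below `α_0` a strong
subtree never splits, so each `T'_i` has a single node on level `α_0`: all these restrictions
are the same tuple.
-/

namespace SeqNode

variable {κ : Cardinal.{0}}

theorem eq_of_restrict_succ_eq {s t : SeqNode κ} (hlen : s.len = t.len)
    (h : ∀ γ < s.len, s.restrict (γ + 1) = t.restrict (γ + 1)) : s = t := by
  refine ext hlen fun γ => ?_
  rcases lt_or_ge γ s.len with hγ | hγ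
  · have hγs : γ < (s.restrict (γ + 1)).len := by
      rw [restrict_len_of_le (Order.add_one_le_iff.2 hγ)]; exact Order.lt_add_one_iff.2 le_rfl
    have hγt : γ < (t.restrict (γ + 1)).len := by
      rwa [← h γ hγ]
    rw [← (s.restrict_init _).2 γ hγs, ← (t.restrict_init _).2 γ hγt, h γ hγ]
  · rw [s.val_eq_zero γ hγ, t.val_eq_zero γ (hlen ▸ hγ)]

end SeqNode

theorem IsSeqTree.restrict_mem {κ : Cardinal.{0}} {T : Set (SeqNode κ)} (hT : IsSeqTree T)
    {t : SeqNode κ} (ht : t ∈ T) (β : Ordinal.{0}) : t.restrict β ∈ T :=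
  hT t ht _ (t.restrict_init β)

theorem IsSeqTree.eq_of_len_eq_of_unique_succ {κ : Cardinal.{0}} {T : Set (SeqNode κ)}
    (hT : IsSeqTree T) {α : Ordinal.{0}}
    (hsucc : ∀ u ∈ T, u.len < α → ∃! s : SeqNode κ, s ∈ T ∧ IsImmediateSucc u s) :
    ∀ β ≤ α, ∀ s ∈ T, ∀ t ∈ T, s.len = β → t.len = β → s = t := by
  intro β
  induction β using WellFoundedLT.induction with
  | ind β IH =>
    intro hβα s hs t ht hsβ htβ
    rcases Order.mem_range_succ_or_isSuccPrelimit β with ⟨γ, rfl⟩ | hlim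
    · have hγ : γ < Order.succ γ := Order.lt_succ γ
      have hγs : (s.restrict γ).len = γ := SeqNode.restrict_len_of_le (hsβ ▸ hγ.le)
      have hγt : (t.restrict γ).len = γ := SeqNode.restrict_len_of_le (htβ ▸ hγ.le)
      have hroot : s.restrict γ = t.restrict γ :=
        IH γ hγ (hγ.le.trans hβα) _ (hT.restrict_mem hs γ) _ (hT.restrict_mem ht γ) hγs hγt
      obtain ⟨u, -, hu⟩ := hsucc _ (hT.restrict_mem hs γ) (by rw [hγs]; exact hγ.trans_le hβα)
      have hsu : s = u := hu s ⟨hs, s.restrict_init γ, by rw [hγs, hsβ, Order.succ_eq_add_one]⟩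
      have htu : t = u := hu t ⟨ht, hroot ▸ t.restrict_init γ,
        by rw [hroot, hγt, htβ, Order.succ_eq_add_one]⟩
      rw [hsu, htu]
    · refine SeqNode.eq_of_restrict_succ_eq (hsβ.trans htβ.symm) fun γ hγ => ?_
      have hγ1 : γ + 1 < β := by
        rw [← Order.succ_eq_add_one]; exact hlim.succ_lt (hsβ ▸ hγ)
      exact IH _ hγ1 (hγ1.le.trans hβα) _ (hT.restrict_mem hs _) _ (hT.restrict_mem ht _)
        (SeqNode.restrict_len_of_le (hsβ ▸ hγ1.le)) (SeqNode.restrict_len_of_le (htβ ▸ hγ1.le))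

theorem IsStrongSubtree.eq_of_len_eq_of_le_splitting {κ : Cardinal.{0}}
    {T' T : Set (SeqNode κ)} {A : Set Ordinal.{0}} (hT' : IsStrongSubtree κ T' T A)
    {α : Ordinal.{0}} (hα : ∀ a ∈ A, α ≤ a) {s t : SeqNode κ} (hs : s ∈ T') (ht : t ∈ T')
    (hlen : s.len = t.len) (hle : s.len ≤ α) : s = t :=
  hT'.2.1.1.eq_of_len_eq_of_unique_succ
    (fun u hu hlt => (hT'.2.2.2 u hu).2 fun hA => (hlt.trans_le (hα _ hA)).false)
    _ hle s hs t ht rfl hlen.symm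

theorem IsIncreasingEnum.apply_zero_le {e : Ordinal.{0} → Ordinal.{0}} {η : Ordinal.{0}}
    {A : Set Ordinal.{0}} (he : IsIncreasingEnum e η A) : ∀ a ∈ A, e 0 ≤ a := by
  intro a ha
  obtain ⟨ζ, hζ, rfl⟩ := he.2.2 a ha
  rcases eq_or_ne ζ 0 with rfl | hζ0
  · exact le_rfl
  · exact (he.2.1 0 ζ (pos_iff_ne_zero.2 hζ0) hζ).le

theorem hltc_implies_hl_general (d : ℕ) (κ : Cardinal.{0}) (h : HLtc d κ) :
    ∀ σ : Cardinal.{0}, 0 < σ → σ < κ → HL d σ κ := by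
  intro σ hσ0 hσκ T hT c hc
  obtain ⟨T', A, e, hsub, henum, htail⟩ :=
    h T hT (fun _ => σ) (fun _ _ => ⟨hσ0, hσκ⟩) (fun _ => c) (fun _ _ => hc)
  have hroot : ∀ x : Fin d → SeqNode κ, (∃ α ∈ A, ∀ i, x i ∈ SeqLevel (T' i) α) →
      c x = c (fun i => (x i).restrict (e 0)) ∧
      ∀ i, (x i).restrict (e 0) ∈ T' i ∧ ((x i).restrict (e 0)).len = e 0 := by
    rintro x ⟨α, hα, hx⟩
    obtain ⟨ξ, hξ, rfl⟩ := henum.2.2 α hα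
    refine ⟨htail 0 ξ zero_le hξ x hx, fun i => ⟨(hsub i).2.1.1.restrict_mem (hx i).1 _, ?_⟩⟩
    exact SeqNode.restrict_len_of_le ((hx i).2 ▸ henum.apply_zero_le _ hα)
  refine ⟨T', A, hsub, fun x hx y hy => ?_⟩
  obtain ⟨hcx, hx0⟩ := hroot x hx
  obtain ⟨hcy, hy0⟩ := hroot y hy
  rw [hcx, hcy]
  congr 1
  funext i
  exact (hsub i).eq_of_len_eq_of_le_splitting henum.apply_zero_le (hx0 i).1 (hy0 i).1
    ((hx0 i).2.trans (hy0 i).2.symm) (hx0 i).2.le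

/-- For infinite κ, the tail cone Halpern–Läuchli theorem implies
HL(d,σ,κ) for every cardinal 0 < σ < κ. -/
theorem hltc_implies_hl (d : ℕ) (hd : 1 ≤ d) (κ : Cardinal.{0}) (hκ : ℵ₀ ≤ κ)
    (h : HLtc d κ) :
    ∀ σ : Cardinal.{0}, 0 < σ → σ < κ → HL d σ κ :=
  hltc_implies_hl_general d κ h
end
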